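/- arXiv:1308.5895 — 4 statements merged into one kernel-verified Lean document; each statement's English description precedes it below -/
import Mathlib

section
/- If f is a rational map of degree d ≥ 2 all of whose critical points are fixed points, and all fixed points of f are simple (so that the holomorphic fixed-point formula Σ_{z ∈ Fix(f)} 1/(1 - f'(z)) = 1 holds), then the number of distinct critical points of f is at most d. -/
theorem Finset.sum_inv_one_sub_eq_card {α K : Type*} [DivisionRing K] (s : Finset α)
    (μ : α → K) (h : ∀ z ∈ s, μ z = 0) : ∑ z ∈ s, (1 - μ z)⁻¹ = s.card := by
  rw [Finset.card_eq_sum_ones, Nat.cast_sum, Nat.cast_one]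
  exact Finset.sum_congr rfl fun z hz => by rw [h z hz, sub_zero, inv_one]

theorem card_fixed_critical_points_le_degree_general
    (d : ℕ) (hd : 2 ≤ d) (Fix : Finset ℂ) (μ : ℂ → ℂ)
    (hcard : Fix.card = d + 1)
    (hformula : ∑ z ∈ Fix, (1 - μ z)⁻¹ = 1)
    (C : Finset ℂ) (hCFix : C ⊆ Fix)
    (hcrit : ∀ z ∈ C, μ z = 0) :
    C.card ≤ d := by
  by_contra! hlt
  -- Otherwise every fixed point is critical, so each term of the formula is `1`.
  obtain rfl : C = Fix := Finset.eq_of_subset_of_card_le hCFix (by omega)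
  rw [Finset.sum_inv_one_sub_eq_card C μ hcrit, hcard] at hformula
  have hd0 : d = 0 := by push_cast at hformula; exact_mod_cast add_eq_right.mp hformula
  omega

/-- If `f` is a rational map of degree `d ≥ 2` all of whose critical points are fixed,
and all fixed points of `f` are simple — so that `f` has exactly `d + 1` distinct fixed
points `Fix`, with multipliers `μ z ≠ 1`, satisfying the holomorphic fixed-point formula
`∑_{z ∈ Fix} 1/(1 - μ z) = 1` — then the number of distinct critical points of `f`
(a set `C ⊆ Fix` of fixed points with multiplier `0`) is at most `d`. -/
theorem card_fixed_critical_points_le_degree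
    (d : ℕ) (hd : 2 ≤ d) (Fix : Finset ℂ) (μ : ℂ → ℂ)
    (hcard : Fix.card = d + 1)
    (hsimple : ∀ z ∈ Fix, μ z ≠ 1)
    (hformula : ∑ z ∈ Fix, (1 - μ z)⁻¹ = 1)
    (C : Finset ℂ) (hCFix : C ⊆ Fix)
    (hcrit : ∀ z ∈ C, μ z = 0) :
    C.card ≤ d :=
  card_fixed_critical_points_le_degree_general d hd Fix μ hcard hformula C hCFix hcrit
end

section
/- Fix d ≥ 3. Every partition 2d - 2 = m₁ + … + m_n with n ≤ d and 1 ≤ m_i ≤ d - 1 for each i arises as the degree sequence of a connected loopless multigraph on n vertices (i.e., there is a connected multigraph without loops whose i-th vertex has degree m_i). -/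
open scoped BigOperators

/-- A loopless multigraph on `Fin n` is encoded by a symmetric edge-multiplicity
function `w` vanishing on the diagonal. -/
def IsMultigraph {n : ℕ} (w : Fin n → Fin n → ℕ) : Prop :=
  (∀ i j, w i j = w j i) ∧ (∀ i, w i i = 0)

/-- The degree of vertex `i` in the multigraph `w` (edge-endpoints counted with
multiplicity). -/
def mdeg {n : ℕ} (w : Fin n → Fin n → ℕ) (i : Fin n) : ℕ := ∑ j, w i j

/-- The underlying simple graph of a multigraph `w`. -/
def mSimple {n : ℕ} (w : Fin n → Fin n → ℕ) : SimpleGraph (Fin n) :=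
  SimpleGraph.fromRel (fun i j => 0 < w i j)
/-!
Induction on the number `E` of edges. If some vertex is a leaf, delete it and attach its edge,
in the smaller graph, to a vertex of largest remaining degree; otherwise delete one edge between
an arbitrary vertex and a vertex of largest degree among the others. As the degrees sum to `2E`,
no vertex other than the two chosen ones can have degree `E`, so the bound `mᵢ ≤ E` passes to the
reduced sequence; when there is no leaf all degrees are at least `2`, which gives `n ≤ E`.
-/

open Finset

variable {n : ℕ}

lemma IsMultigraph.add {w w' : Fin n → Fin n → ℕ} (hw : IsMultigraph w) (hw' : IsMultigraph w') :
    IsMultigraph (w + w') :=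
  ⟨fun i j => by simp [hw.1 i j, hw'.1 i j], fun i => by simp [hw.2 i, hw'.2 i]⟩

lemma IsMultigraph.mSimple_adj {w : Fin n → Fin n → ℕ} (hw : IsMultigraph w) {a b : Fin n} :
    (mSimple w).Adj a b ↔ 0 < w a b := by
  rw [mSimple, SimpleGraph.fromRel_adj, hw.1 b a, or_self, and_iff_right_iff_imp]
  rintro h rfl
  simp [hw.2] at h

lemma mdeg_add (w w' : Fin n → Fin n → ℕ) : mdeg (w + w') = mdeg w + mdeg w' := by
  ext i
  simp [mdeg, sum_add_distrib]

lemma mSimple_mono {w w' : Fin n → Fin n → ℕ} (h : w ≤ w') : mSimple w ≤ mSimple w' := by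
  intro a b
  simp only [mSimple, SimpleGraph.fromRel_adj]
  exact fun ⟨hab, hw⟩ =>
    ⟨hab, hw.imp (fun h' => h'.trans_le (h a b)) (fun h' => h'.trans_le (h b a))⟩

def singleEdge (i j : Fin n) : Fin n → Fin n → ℕ := fun a b => if s(a, b) = s(i, j) then 1 else 0

lemma isMultigraph_singleEdge {i j : Fin n} (hij : i ≠ j) : IsMultigraph (singleEdge i j) := by
  refine ⟨fun a b => by simp [singleEdge, Sym2.eq_swap], fun a => ?_⟩
  simp only [singleEdge, Sym2.eq_iff, ite_eq_right_iff]
  rintro (⟨rfl, rfl⟩ | ⟨rfl, rfl⟩) <;> exact absurd rfl hij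

lemma mdeg_singleEdge {i j : Fin n} (hij : i ≠ j) :
    mdeg (singleEdge i j) = Pi.single i 1 + Pi.single j 1 := by
  ext x
  by_cases hxi : x = i <;> by_cases hxj : x = j <;>
    simp_all [mdeg, singleEdge]

def insertIsolated (p : Fin (n + 1)) (w : Fin n → Fin n → ℕ) : Fin (n + 1) → Fin (n + 1) → ℕ :=
  Fin.insertNth (α := fun _ => Fin (n + 1) → ℕ) p 0 fun a => Fin.insertNth p 0 (w a)

section insertIsolated

variable (p : Fin (n + 1)) (w : Fin n → Fin n → ℕ)

@[simp] lemma insertIsolated_self_left (b : Fin (n + 1)) : insertIsolated p w p b = 0 := by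
  simp [insertIsolated]

@[simp] lemma insertIsolated_self_right (a : Fin (n + 1)) : insertIsolated p w a p = 0 := by
  rcases p.eq_self_or_eq_succAbove a with rfl | ⟨a, rfl⟩ <;> simp [insertIsolated]

@[simp] lemma insertIsolated_succAbove (a b : Fin n) :
    insertIsolated p w (p.succAbove a) (p.succAbove b) = w a b := by
  simp [insertIsolated]

variable {w}

lemma IsMultigraph.insertIsolated (hw : IsMultigraph w) :
    IsMultigraph (_root_.insertIsolated p w) := by
  refine ⟨fun a b => ?_, fun a => ?_⟩
  · rcases p.eq_self_or_eq_succAbove a with ha | ⟨a, rfl⟩ <;>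
      rcases p.eq_self_or_eq_succAbove b with hb | ⟨b, rfl⟩ <;> simp [*, hw.1]
  · rcases p.eq_self_or_eq_succAbove a with ha | ⟨a, rfl⟩ <;> simp [*, hw.2]

lemma mdeg_insertIsolated : mdeg (insertIsolated p w) = Fin.insertNth p 0 (mdeg w) := by
  ext a
  rcases p.eq_self_or_eq_succAbove a with ha | ⟨a, rfl⟩ <;>
    simp [*, mdeg, Fin.sum_univ_succAbove _ p]

end insertIsolated

def IsConnectedMultigraphic (m : Fin n → ℕ) : Prop :=
  ∃ w, IsMultigraph w ∧ mdeg w = m ∧ (mSimple w).Connected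

lemma IsConnectedMultigraphic.add_edge {m : Fin n → ℕ} (h : IsConnectedMultigraphic m) {i j : Fin n}
    (hij : i ≠ j) : IsConnectedMultigraphic (m + Pi.single i 1 + Pi.single j 1) := by
  obtain ⟨w, hw, rfl, hconn⟩ := h
  refine ⟨w + singleEdge i j, hw.add (isMultigraph_singleEdge hij), ?_, ?_⟩
  · rw [mdeg_add, mdeg_singleEdge hij, add_assoc]
  · exact hconn.mono (mSimple_mono le_self_add)

lemma isConnectedMultigraphic_two {E : ℕ} (hE : 0 < E) :
    IsConnectedMultigraphic (fun _ : Fin 2 => E) := by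
  induction E, hE using Nat.le_induction with
  | base =>
    refine ⟨singleEdge 0 1, isMultigraph_singleEdge zero_ne_one, ?_, ?_⟩
    · ext x
      fin_cases x <;> simp [mdeg_singleEdge]
    · refine (SimpleGraph.connected_iff_exists_forall_reachable _).2 ⟨0, fun a => ?_⟩
      fin_cases a
      · rfl
      · exact ((isMultigraph_singleEdge zero_ne_one).mSimple_adj.2 (by simp [singleEdge])).reachable
  | succ E _ ih =>
    convert IsConnectedMultigraphic.add_edge ih zero_ne_one using 1
    ext x
    fin_cases x <;> simp

lemma IsConnectedMultigraphic.insertNth_leaf {m : Fin (n + 1) → ℕ} (h : IsConnectedMultigraphic m)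
    (p : Fin (n + 2)) (j : Fin (n + 1)) :
    IsConnectedMultigraphic (Fin.insertNth p 1 (m + Pi.single j 1)) := by
  obtain ⟨w, hw, rfl, hconn⟩ := h
  have hp : p ≠ p.succAbove j := (p.succAbove_ne j).symm
  have hw' := (hw.insertIsolated p).add (isMultigraph_singleEdge hp)
  refine ⟨insertIsolated p w + singleEdge p (p.succAbove j), hw', ?_, ?_⟩
  · ext a
    rcases p.eq_self_or_eq_succAbove a with rfl | ⟨a, rfl⟩ <;>
      simp [mdeg_add, mdeg_insertIsolated, mdeg_singleEdge hp, Pi.single_apply]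
  · let f : mSimple w →g mSimple (insertIsolated p w + singleEdge p (p.succAbove j)) :=
      ⟨p.succAbove, fun {a b} hab => by
        simp only [hw'.mSimple_adj, hw.mSimple_adj, Pi.add_apply, insertIsolated_succAbove] at hab ⊢
        omega⟩
    have hleaf : (mSimple _).Adj p (p.succAbove j) := hw'.mSimple_adj.2 (by simp [singleEdge])
    refine (SimpleGraph.connected_iff_exists_forall_reachable _).2 ⟨p, fun a => ?_⟩
    rcases p.eq_self_or_eq_succAbove a with rfl | ⟨a, rfl⟩
    · rfl
    · exact hleaf.reachable.trans ((hconn.preconnected j a).map f)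

lemma exists_eq_add_single {ι : Type*} [DecidableEq ι] {m : ι → ℕ} {j : ι} (hj : 0 < m j) :
    ∃ m', m = m' + (Pi.single j 1 : ι → ℕ) :=
  ⟨m - Pi.single j 1, by ext x; by_cases hx : x = j <;> simp [hx]; omega⟩

lemma lt_of_le_of_sum_lt_two_mul {ι : Type*} {s : Finset ι} {m : ι → ℕ} {x j : ι} {E : ℕ}
    (hx : x ∈ s) (hj : j ∈ s) (hxj : x ≠ j) (hle : m x ≤ m j) (hsum : ∑ y ∈ s, m y < 2 * E) :
    m x < E := by
  classical
  have : m x + m j ≤ ∑ y ∈ s, m y := by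
    rw [← sum_pair hxj]
    exact sum_le_sum_of_subset (insert_subset hx (singleton_subset_iff.2 hj))
  omega

-- Necessary conditions for `m` to be the degree sequence of a connected multigraph with `E > 0`
-- edges; `IsAdmissible.isConnectedMultigraphic` shows that they are sufficient.
structure IsAdmissible (E : ℕ) (m : Fin n → ℕ) : Prop where
  pos_edges : 0 < E
  pos : ∀ i, 0 < m i
  le : ∀ i, m i ≤ E
  sum_eq : ∑ i, m i = 2 * E
  card_le : n ≤ E + 1

namespace IsAdmissible

variable {E : ℕ} {m : Fin n → ℕ}

lemma two_le_card (h : IsAdmissible E m) : 2 ≤ n := by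
  by_contra! hn
  have := sum_le_card_nsmul univ m E fun i _ => h.le i
  simp only [card_univ, Fintype.card_fin, smul_eq_mul, h.sum_eq] at this
  interval_cases n <;> have := h.pos_edges <;> omega

lemma eq_const_of_card_two {m : Fin 2 → ℕ} (h : IsAdmissible E m) : m = fun _ => E := by
  have := h.sum_eq
  have := h.le 0
  have := h.le 1
  ext i
  fin_cases i <;> simp_all [Fin.sum_univ_two] <;> omega

lemma exists_leaf_reduction {k : ℕ} {m : Fin (k + 3) → ℕ} (h : IsAdmissible (E + 1) m)
    {p : Fin (k + 3)} (hp : m p = 1) :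
    ∃ j m', Fin.removeNth p m = m' + Pi.single j (1 : ℕ) ∧ IsAdmissible E m' := by
  set m₀ := Fin.removeNth p m
  have hsum₀ : ∑ x, m₀ x = 2 * E + 1 := by
    have := h.sum_eq
    rw [Fin.sum_univ_succAbove _ p, hp] at this
    simp only [m₀, Fin.removeNth_apply]
    omega
  obtain ⟨j, -, hj⟩ := exists_max_image univ m₀ univ_nonempty
  have hj₂ : 2 ≤ m₀ j := by
    by_contra! hj₁
    have := sum_le_card_nsmul univ m₀ 1 fun x _ => (hj x (mem_univ x)).trans (by omega)
    simp only [card_univ, Fintype.card_fin, smul_eq_mul, mul_one, hsum₀] at this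
    have := h.card_le
    omega
  have hlt : ∀ x, x ≠ j → m₀ x < E + 1 := fun x hx =>
    lt_of_le_of_sum_lt_two_mul (mem_univ x) (mem_univ j) hx (hj x (mem_univ x)) (by omega)
  obtain ⟨m', hm'⟩ := exists_eq_add_single (show 0 < m₀ j by omega)
  have hm'j : m₀ j = m' j + 1 := by simp [hm']
  have hm'ne : ∀ x, x ≠ j → m₀ x = m' x := fun x hx => by simp [hm', hx]
  refine ⟨j, m', hm', ?_, fun x => ?_, fun x => ?_, ?_, ?_⟩
  · have := h.card_le
    omega
  · rcases eq_or_ne x j with rfl | hx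
    · omega
    · rw [← hm'ne x hx]
      exact h.pos _
  · rcases eq_or_ne x j with rfl | hx
    · have := h.le (p.succAbove x)
      simp only [m₀, Fin.removeNth_apply] at hm'j
      omega
    · rw [← hm'ne x hx]
      exact Nat.lt_succ_iff.1 (hlt x hx)
  · have : ∑ x, m₀ x = ∑ x, m' x + 1 := by simp [hm', sum_add_distrib]
    omega
  · have := h.card_le
    omega

lemma exists_edge_reduction (h : IsAdmissible (E + 1) m) (hm : ∀ x, m x ≠ 1) :
    ∃ i j m', i ≠ j ∧ m = m' + Pi.single i 1 + Pi.single j 1 ∧ IsAdmissible E m' := by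
  have hn := h.two_le_card
  let i : Fin n := ⟨0, by omega⟩
  obtain ⟨j, hj, hjmax⟩ := exists_max_image (univ.erase i) m
    ⟨⟨1, by omega⟩, by simp [Fin.ext_iff, i]⟩
  have hij : i ≠ j := (ne_of_mem_erase hj).symm
  have hlt : ∀ x, x ≠ i → x ≠ j → m x < E + 1 := by
    intro x hxi hxj
    have := add_sum_erase univ m (mem_univ i)
    have := h.pos i
    exact lt_of_le_of_sum_lt_two_mul (mem_erase.2 ⟨hxi, mem_univ x⟩) hj hxj
      (hjmax x (mem_erase.2 ⟨hxi, mem_univ x⟩)) (by rw [h.sum_eq] at *; omega)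
  obtain ⟨m₁, hm₁⟩ := exists_eq_add_single (h.pos j)
  obtain ⟨m', hm'⟩ := exists_eq_add_single (j := i) (show 0 < m₁ i by
    simpa [hm₁, hij] using h.pos i)
  have hm_eq : m = m' + Pi.single i 1 + Pi.single j 1 := by rw [hm₁, hm']
  have hcases : ∀ x, m x = m' x + 1 ∨ (m x < E + 1 ∧ m x = m' x) := by
    intro x
    by_cases hxi : x = i
    · subst hxi; simp [hm_eq, hij]
    by_cases hxj : x = j
    · subst hxj; simp [hm_eq, hxi]
    · exact Or.inr ⟨hlt x hxi hxj, by simp [hm_eq, hxi, hxj]⟩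
  have hcard : n * 2 ≤ 2 * (E + 1) := by
    have := card_nsmul_le_sum univ m 2 fun x _ => by have := h.pos x; have := hm x; omega
    simpa [h.sum_eq] using this
  refine ⟨i, j, m', hij, hm_eq, by omega, fun x => ?_, fun x => ?_, ?_, by omega⟩
  · have := h.pos x; have := hm x; have := hcases x; omega
  · have := h.le x; have := hcases x; omega
  · have : ∑ x, m x = ∑ x, m' x + 2 := by simp [hm_eq, sum_add_distrib]
    have := h.sum_eq
    omega

end IsAdmissible

theorem IsAdmissible.isConnectedMultigraphic {E : ℕ} {m : Fin n → ℕ} (h : IsAdmissible E m) :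
    IsConnectedMultigraphic m := by
  induction E generalizing n m with
  | zero => exact absurd h.pos_edges (lt_irrefl 0)
  | succ E ih =>
    obtain ⟨k, rfl⟩ : ∃ k, n = k + 2 := ⟨n - 2, by have := h.two_le_card; omega⟩
    cases k with
    | zero => exact h.eq_const_of_card_two ▸ isConnectedMultigraphic_two E.succ_pos
    | succ k =>
      by_cases hleaf : ∃ p, m p = 1
      · obtain ⟨p, hp⟩ := hleaf
        obtain ⟨j, m', hm', h'⟩ := h.exists_leaf_reduction hp
        rw [← Fin.insertNth_self_removeNth p m, hp, hm']
        exact (ih h').insertNth_leaf p j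
      · obtain ⟨i, j, m', hij, rfl, h'⟩ := h.exists_edge_reduction (not_exists.mp hleaf)
        exact (ih h').add_edge hij

/-- Fix `d ≥ 3`.  Any partition `2d - 2 = m₁ + … + m_n` with `n ≤ d` and
`1 ≤ mᵢ ≤ d - 1` arises as the degree sequence of a connected loopless multigraph
on `n` vertices. -/
theorem partition_realizable_by_connected_multigraph
    (d n : ℕ) (hd : 3 ≤ d) (hn : n ≤ d) (m : Fin n → ℕ)
    (hm : ∀ i, 1 ≤ m i ∧ m i ≤ d - 1)
    (hsum : ∑ i, m i = 2 * d - 2) :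
    ∃ w : Fin n → Fin n → ℕ,
      IsMultigraph w ∧ (∀ i, mdeg w i = m i) ∧ (mSimple w).Connected := by
  have h : IsAdmissible (d - 1) m :=
    ⟨by omega, fun i => (hm i).1, fun i => (hm i).2, by omega, by omega⟩
  obtain ⟨w, hw, hdeg, hconn⟩ := h.isConnectedMultigraphic
  exact ⟨w, hw, congrFun hdeg, hconn⟩
end

section
/- If a branch datum of degree d consists of partitions of d each of the form [k, 1, 1, …, 1] (a single part k ≥ 2 and the rest ones), and the Riemann–Hurwitz condition Σᵢ(kᵢ - 1) = 2d - 2 holds with kᵢ ≤ d for all i and at most d parts exceeding 1, then there exists an n-tuple of permutations (σ₁, …, σ_n) in S_d such that each σᵢ is a single kᵢ-cycle, σ₁·σ₂·…·σ_n = id, and ⟨σ₁, …, σ_n⟩ is transitive on {1, …, d}. -/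
/-!
Take a tree on `d` vertices and its closed depth-first walk `w₀, w₁, …, w_{2d-2}`, which crosses
every edge once in each direction. Cut the walk into consecutive segments of `kᵢ - 1` steps and let
`σᵢ` be the cyclic permutation of the vertices of the `i`-th segment. If every segment is a path in
the tree, `σᵢ` is a `kᵢ`-cycle; the product of the `σᵢ` telescopes to the cyclic permutation of the
whole walk, which is trivial because the walk retraces each of its steps; and consecutive segments
share an endpoint, so the `σᵢ` act transitively. The tree is a spider adapted to `k`: a path
`0 – 1 – ⋯ – p`, where `p` is the last cut point `≤ d - 1`, and a path `j – (p+1) – ⋯ – (d-1)`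
chosen so that the segment starting at `p` runs exactly from `p` back to `j` and out to `d - 1`.
-/

open List Equiv Equiv.Perm Set

variable {α : Type*}

theorem List.formPerm_append_cons [DecidableEq α] (l₁ : List α) (x : α) (l₂ : List α) :
    formPerm (l₁ ++ x :: l₂) = formPerm (l₁ ++ [x]) * formPerm (x :: l₂) := by
  induction l₁ with
  | nil => simp
  | cons a l ih =>
    cases l with
    | nil => simp [formPerm_cons_cons]
    | cons b l =>
      simp only [cons_append, formPerm_cons_cons] at ih ⊢
      rw [ih, mul_assoc]

theorem List.sameCycle_formPerm_of_mem [DecidableEq α] {l : List α} (hl : l.Nodup) {x y : α}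
    (hx : x ∈ l) (hy : y ∈ l) : l.formPerm.SameCycle x y := by
  match l, hl, hx, hy with
  | [_], _, hx, hy => rw [mem_singleton.1 hx, mem_singleton.1 hy]
  | a :: b :: l, hl, hx, hy =>
    have hlen : 2 ≤ (a :: b :: l).length := by simp
    exact (isCycle_formPerm hl hlen).sameCycle ((formPerm_apply_mem_ne_self_iff _ hl _ hx).2 hlen)
      ((formPerm_apply_mem_ne_self_iff _ hl _ hy).2 hlen)

def walkSegment (w : ℕ → α) (a b : ℕ) : List α :=
  (range' a (b + 1 - a)).map w

section walkSegment

variable (w : ℕ → α)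

@[simp]
theorem length_walkSegment (a b : ℕ) : (walkSegment w a b).length = b + 1 - a := by
  simp [walkSegment]

@[simp]
theorem getElem_walkSegment (a b i : ℕ) (h : i < (walkSegment w a b).length) :
    (walkSegment w a b)[i] = w (a + i) := by
  simp [walkSegment]

theorem mem_walkSegment {a b : ℕ} {x : α} :
    x ∈ walkSegment w a b ↔ ∃ t ∈ Icc a b, w t = x := by
  simp only [walkSegment, mem_map, mem_range'_1, mem_Icc]
  constructor <;> rintro ⟨t, ht, rfl⟩ <;> exact ⟨t, by omega, rfl⟩

theorem nodup_walkSegment {a b : ℕ} (hw : InjOn w (Icc a b)) : (walkSegment w a b).Nodup :=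
  (nodup_range' (step := 1) (by simp)).map_on fun s hs t ht hst =>
    hw (by simp only [mem_range'_1] at hs; exact ⟨hs.1, by omega⟩)
      (by simp only [mem_range'_1] at ht; exact ⟨ht.1, by omega⟩) hst

variable [DecidableEq α]

theorem formPerm_walkSegment_self (a : ℕ) : formPerm (walkSegment w a a) = 1 := by
  simp [walkSegment]

theorem formPerm_walkSegment_trans {a b c : ℕ} (hab : a ≤ b) (hbc : b ≤ c) :
    formPerm (walkSegment w a c) =
      formPerm (walkSegment w a b) * formPerm (walkSegment w b c) := by
  have hsplit : range' a (c + 1 - a) = range' a (b - a) ++ range' b (c + 1 - b) := by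
    have h := range'_append_1 (s := a) (m := b - a) (n := c + 1 - b)
    rw [show a + (b - a) = b by omega, show b - a + (c + 1 - b) = c + 1 - a by omega] at h
    exact h.symm
  have hleft : range' a (b + 1 - a) = range' a (b - a) ++ [b] := by
    rw [show b + 1 - a = b - a + 1 by omega, range'_1_concat, show a + (b - a) = b by omega]
  have hright : range' b (c + 1 - b) = b :: range' (b + 1) (c - b) := by
    rw [show c + 1 - b = c - b + 1 by omega, range'_succ]
  simp only [walkSegment, hsplit, hleft, hright, map_append, map_cons, map_nil]
  exact formPerm_append_cons ..

theorem sameCycle_formPerm_walkSegment {a b s t : ℕ} (hw : InjOn w (Icc a b))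
    (hs : s ∈ Icc a b) (ht : t ∈ Icc a b) :
    (formPerm (walkSegment w a b)).SameCycle (w s) (w t) :=
  sameCycle_formPerm_of_mem (nodup_walkSegment w hw) ((mem_walkSegment w).2 ⟨s, hs, rfl⟩)
    ((mem_walkSegment w).2 ⟨t, ht, rfl⟩)

theorem cycleType_formPerm_walkSegment [Fintype α] {a b : ℕ} (hab : a < b)
    (hw : InjOn w (Icc a b)) :
    (formPerm (walkSegment w a b)).cycleType = {b + 1 - a} := by
  have hnd := nodup_walkSegment w hw
  have hlen : 2 ≤ (walkSegment w a b).length := by simp; omega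
  rw [(isCycle_formPerm hnd hlen).cycleType, support_formPerm_of_nodup _ hnd
    (fun x hx => by simp [hx] at hlen), toFinset_card_of_nodup hnd, length_walkSegment]

theorem formPerm_walkSegment_eq_one_of_retrace {a b r : ℕ} (hr : r ≤ a) (hab : a ≤ b)
    (hret : ∀ i ≤ r, w (a - i) = w (b + i)) (h : formPerm (walkSegment w a b) = 1) :
    formPerm (walkSegment w (a - r) (b + r)) = 1 := by
  have hback : walkSegment w b (b + r) = (walkSegment w (a - r) a).reverse := by
    refine ext_getElem (by simp; omega) fun i h₁ h₂ => ?_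
    simp only [getElem_walkSegment, getElem_reverse, length_walkSegment]
    simp only [length_walkSegment] at h₁
    rw [← hret i (by omega)]
    congr 1
    omega
  rw [formPerm_walkSegment_trans w (by omega : a - r ≤ a) (by omega : a ≤ b + r),
    formPerm_walkSegment_trans w hab (by omega : b ≤ b + r), h, hback, formPerm_reverse]
  group

end walkSegment

def walkCycles [DecidableEq α] {n : ℕ} (w : ℕ → α) (E : Fin (n + 1) → ℕ) (i : Fin n) : Perm α :=
  formPerm (walkSegment w (E i.castSucc) (E i.succ))

section walkCycles

variable [DecidableEq α] (w : ℕ → α)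

theorem prod_walkCycles {n : ℕ} {E : Fin (n + 1) → ℕ} (hE : Monotone E) :
    (ofFn (walkCycles w E)).prod = formPerm (walkSegment w (E 0) (E (Fin.last n))) := by
  induction n with
  | zero => exact (formPerm_walkSegment_self w _).symm
  | succ n ih =>
    have hinit :
        (ofFn fun i => walkCycles w E i.castSucc) = ofFn (walkCycles w (E ∘ Fin.castSucc)) := rfl
    rw [ofFn_succ', prod_concat, hinit, ih (hE.comp Fin.strictMono_castSucc.monotone)]
    rw [walkCycles, Function.comp_apply, Function.comp_apply, Fin.castSucc_zero, ← Fin.succ_last,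
      ← formPerm_walkSegment_trans w (hE (Fin.zero_le _)) (hE (Fin.castSucc_le_succ _))]

theorem cycleType_walkCycles [Fintype α] {n : ℕ} {E : Fin (n + 1) → ℕ} (hE : StrictMono E)
    (hw : ∀ i : Fin n, InjOn w (Icc (E i.castSucc) (E i.succ))) (i : Fin n) :
    (walkCycles w E i).cycleType = {E i.succ + 1 - E i.castSucc} :=
  cycleType_formPerm_walkSegment w (hE (Fin.castSucc_lt_succ (i := i))) (hw i)

theorem exists_mem_closure_walkCycles_apply_eq {n : ℕ} {E : Fin (n + 1) → ℕ} (hE : Monotone E)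
    (hw : ∀ i : Fin n, InjOn w (Icc (E i.castSucc) (E i.succ))) (i : Fin (n + 1)) {t : ℕ}
    (ht : t ∈ Icc (E 0) (E i)) :
    ∃ g ∈ Subgroup.closure (range (walkCycles w E)), g (w (E 0)) = w t := by
  induction i using Fin.induction generalizing t with
  | zero => exact ⟨1, one_mem _, by rw [le_antisymm ht.2 ht.1]; rfl⟩
  | succ i ih =>
    by_cases hti : t ≤ E i.castSucc
    · exact ih ⟨ht.1, hti⟩
    obtain ⟨g, hg, hgt⟩ := ih (t := E i.castSucc) ⟨hE (Fin.zero_le _), le_rfl⟩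
    obtain ⟨z, hz⟩ := sameCycle_formPerm_walkSegment w (hw i) ⟨le_rfl, hE (Fin.castSucc_le_succ i)⟩
      ⟨(not_le.1 hti).le, ht.2⟩
    have hσi : walkCycles w E i ∈ Subgroup.closure (range (walkCycles w E)) :=
      Subgroup.subset_closure (mem_range_self i)
    refine ⟨walkCycles w E i ^ z * g, mul_mem (zpow_mem hσi z) hg, ?_⟩
    rw [Perm.mul_apply, hgt, ← hz]
    rfl

theorem exists_mem_closure_walkCycles_apply_eq_of_cover {n : ℕ} {E : Fin (n + 1) → ℕ}
    (hE : Monotone E) (hw : ∀ i : Fin n, InjOn w (Icc (E i.castSucc) (E i.succ)))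
    (hcover : ∀ x, ∃ t ∈ Icc (E 0) (E (Fin.last n)), w t = x) (x y : α) :
    ∃ g ∈ Subgroup.closure (range (walkCycles w E)), g x = y := by
  obtain ⟨s, hs, rfl⟩ := hcover x
  obtain ⟨t, ht, rfl⟩ := hcover y
  obtain ⟨g, hg, hgs⟩ := exists_mem_closure_walkCycles_apply_eq w hE hw _ hs
  obtain ⟨h, hh, hht⟩ := exists_mem_closure_walkCycles_apply_eq w hE hw _ ht
  exact ⟨h * g⁻¹, mul_mem hh (inv_mem hg), by simp [← hgs, hht]⟩

end walkCycles

theorem Fin.exists_castSucc_le_lt_succ {β : Type*} [LinearOrder β] {n : ℕ} (E : Fin (n + 1) → β)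
    {x : β} (h0 : E 0 ≤ x) (hlast : x < E (Fin.last n)) :
    ∃ i : Fin n, E i.castSucc ≤ x ∧ x < E i.succ := by
  by_contra! h
  exact hlast.not_ge (Fin.induction h0 h (Fin.last n))

/-- The depth-first walk from `0` on the spider: up to `p`, back to `j`, out to `d - 1`, back
to `0`. -/
def spiderWalk (d p j t : ℕ) : ℕ :=
  if t ≤ p then t
  else if t ≤ 2 * p - j then 2 * p - t
  else if t ≤ p + (d - 1 - j) then t + j - p
  else if t ≤ 2 * d - 3 - j then 2 * d - 2 + p - j - t
  else 2 * d - 2 - t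

section spiderWalk

variable {d p j : ℕ} (hjp : j < p) (hpd : p < d)
include hjp hpd

theorem spiderWalk_lt (t : ℕ) : spiderWalk d p j t < d := by
  unfold spiderWalk; split_ifs <;> omega

theorem injOn_spiderWalk :
    InjOn (spiderWalk d p j) (Icc 0 p) ∧ InjOn (spiderWalk d p j) (Icc p (p + (d - 1 - j))) ∧
      InjOn (spiderWalk d p j) (Icc (p + (d - 1 - j)) (2 * d - 2)) := by
  refine ⟨?_, ?_, ?_⟩ <;>
  · intro s hs t ht h
    simp only [mem_Icc] at hs ht
    unfold spiderWalk at h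
    split_ifs at h <;> omega

theorem exists_closed_spider_walk :
    ∃ w : ℕ → Fin d, InjOn w (Icc 0 p) ∧ InjOn w (Icc p (p + (d - 1 - j))) ∧
      InjOn w (Icc (p + (d - 1 - j)) (2 * d - 2)) ∧
      formPerm (walkSegment w 0 (2 * d - 2)) = 1 ∧ ∀ x, ∃ t ∈ Icc 0 (2 * d - 2), w t = x := by
  let w : ℕ → Fin d := fun t => ⟨spiderWalk d p j t, spiderWalk_lt hjp hpd t⟩
  obtain ⟨hspine, hbridge, hreturn⟩ := injOn_spiderWalk hjp hpd
  have hret : ∀ {a b r : ℕ}, (∀ i ≤ r, spiderWalk d p j (a - i) = spiderWalk d p j (b + i)) →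
      r ≤ a → a ≤ b → formPerm (walkSegment w a b) = 1 →
      formPerm (walkSegment w (a - r) (b + r)) = 1 :=
    fun h hr hab => formPerm_walkSegment_eq_one_of_retrace w hr hab fun i hi => Fin.ext (h i hi)
  have hpeak : formPerm (walkSegment w j (2 * p - j)) = 1 := by
    have := hret (a := p) (b := p) (r := p - j)
      (fun i hi => by unfold spiderWalk; split_ifs <;> omega) (by omega) le_rfl
      (formPerm_walkSegment_self w p)
    rwa [show p - (p - j) = j by omega, show p + (p - j) = 2 * p - j by omega] at this
  have hleaf : formPerm (walkSegment w (2 * p - j) (2 * d - 2 - j)) = 1 := by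
    have := hret (a := p + (d - 1 - j)) (b := p + (d - 1 - j)) (r := d - 1 - p)
      (fun i hi => by unfold spiderWalk; split_ifs <;> omega) (by omega) le_rfl
      (formPerm_walkSegment_self w _)
    rwa [show p + (d - 1 - j) - (d - 1 - p) = 2 * p - j by omega,
      show p + (d - 1 - j) + (d - 1 - p) = 2 * d - 2 - j by omega] at this
  have hclosed := hret (a := j) (b := 2 * d - 2 - j) (r := j)
    (fun i hi => by unfold spiderWalk; split_ifs <;> omega) le_rfl (by omega)
    (by rw [formPerm_walkSegment_trans w (b := 2 * p - j) (by omega) (by omega), hpeak, hleaf,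
      one_mul])
  rw [Nat.sub_self, show 2 * d - 2 - j + j = 2 * d - 2 by omega] at hclosed
  refine ⟨w, hspine.of_comp (g := Fin.val), hbridge.of_comp (g := Fin.val),
    hreturn.of_comp (g := Fin.val), hclosed, fun x => ?_⟩
  by_cases hx : (x : ℕ) ≤ p
  · exact ⟨x, ⟨Nat.zero_le _, by omega⟩, Fin.ext (by simp [w, spiderWalk, hx])⟩
  · refine ⟨x + (p - j), ⟨Nat.zero_le _, by omega⟩, Fin.ext ?_⟩
    simp only [w, spiderWalk]
    split_ifs <;> omega

end spiderWalk

theorem pure_cycle_hurwitz_factorization_exists_general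
    (d n : ℕ) (hd : 2 ≤ d) (k : Fin n → ℕ)
    (hk : ∀ i, 2 ≤ k i ∧ k i ≤ d)
    (hRH : ∑ i, (k i - 1) = 2 * d - 2) :
    ∃ σ : Fin n → Equiv.Perm (Fin d),
      (∀ i, (σ i).cycleType = {k i}) ∧
      (List.ofFn σ).prod = 1 ∧
      (∀ x y : Fin d, ∃ g ∈ Subgroup.closure (Set.range σ), g x = y) := by
  set E : Fin (n + 1) → ℕ := Fin.partialSum fun i => k i - 1
  have hEsucc (i : Fin n) : E i.succ = E i.castSucc + (k i - 1) := Fin.partialSum_succ _ i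
  have hE : StrictMono E :=
    Fin.strictMono_iff_lt_succ.2 fun i => by have := (hk i).1; rw [hEsucc]; omega
  have hE0 : E 0 = 0 := Fin.partialSum_zero _
  have hElast : E (Fin.last n) = 2 * d - 2 := by
    simp only [E, Fin.partialSum, Fin.val_last, ← hRH]
    rw [take_of_length_le (by simp), sum_ofFn]
  obtain ⟨m, hm_le, hm_lt⟩ := Fin.exists_castSucc_le_lt_succ E (x := d - 1) (by omega) (by omega)
  have hcross : E m.succ = E m.castSucc + (d - 1 - (d - k m)) := by rw [hEsucc]; have := hk m; omega
  obtain ⟨w, hspine, hbridge, hreturn, hclosed, hcover⟩ :=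
    exists_closed_spider_walk (d := d) (p := E m.castSucc) (j := d - k m)
      (by have := hk m; omega) (by omega)
  have hw (i : Fin n) : InjOn w (Icc (E i.castSucc) (E i.succ)) := by
    rcases lt_trichotomy i m with him | rfl | hmi
    · exact hspine.mono
        (Icc_subset_Icc (Nat.zero_le _) (hE.monotone (Fin.succ_le_castSucc_iff.2 him)))
    · rwa [hcross]
    · refine hreturn.mono (Icc_subset_Icc ?_ (hElast ▸ hE.monotone (Fin.le_last _)))
      rw [← hcross]; exact hE.monotone (Fin.succ_le_castSucc_iff.2 hmi)
  refine ⟨walkCycles w E, fun i => ?_, ?_, ?_⟩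
  · rw [cycleType_walkCycles w hE hw, hEsucc]
    have := (hk i).1
    congr 1
    omega
  · rwa [prod_walkCycles w hE.monotone, hE0, hElast]
  · refine exists_mem_closure_walkCycles_apply_eq_of_cover w hE.monotone hw ?_
    rwa [hE0, hElast]

/-- Pure-cycle Hurwitz factorizations exist: if a degree-`d` branch datum consists of
`n` partitions each of the form `[kᵢ, 1, …, 1]` with `2 ≤ kᵢ ≤ d`, satisfying
Riemann–Hurwitz `∑ (kᵢ - 1) = 2d - 2`, and `n ≤ d`, then there are permutations
`σ₁, …, σ_n` in `S_d`, each `σᵢ` a single `kᵢ`-cycle, whose product (in order) is the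
identity and which generate a transitive subgroup of `S_d`. -/
theorem pure_cycle_hurwitz_factorization_exists
    (d n : ℕ) (hd : 2 ≤ d) (hn : n ≤ d) (k : Fin n → ℕ)
    (hk : ∀ i, 2 ≤ k i ∧ k i ≤ d)
    (hRH : ∑ i, (k i - 1) = 2 * d - 2) :
    ∃ σ : Fin n → Equiv.Perm (Fin d),
      (∀ i, (σ i).cycleType = {k i}) ∧
      (List.ofFn σ).prod = 1 ∧
      (∀ x y : Fin d, ∃ g ∈ Subgroup.closure (Set.range σ), g x = y) :=
  pure_cycle_hurwitz_factorization_exists_general d n hd k hk hRH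
end

section
/- Let f be a rational map of degree d with a repelling fixed point at infinity and d distinct finite fixed critical points c₁, …, c_d, each of local degree 2. Then f equals the Newton's method map N_p(z) = z - p(z)/p'(z) for the polynomial p(z) = (z - c₁)⋯(z - c_d). -/
open Polynomial
open scoped BigOperators

/-!
Write `f = P/Q` and `p = ∏ (X - cᵢ)`. The polynomial `P p' - Q (X p' - p)` is the numerator of
`f - N_p` cleared of denominators. At each `cᵢ` both it and its derivative vanish, because
`f(cᵢ) = cᵢ`, `f'(cᵢ) = 0` and `p(cᵢ) = 0`; so `p²` divides it. Since `deg P = d` and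
`deg Q = d - 1`, its degree is below `2d = deg p²`, hence it is zero.
-/

namespace Polynomial

variable {R : Type*} [CommRing R]

/-- `P / Q = X - p / p'` exactly when this vanishes (away from the zeros of `Q` and `p'`). -/
noncomputable def newtonDefect (P Q p : R[X]) : R[X] :=
  P * derivative p - Q * (X * derivative p - p)

theorem X_sub_C_sq_dvd_of_isRoot_derivative {F : R[X]} {a : R} (h₀ : F.IsRoot a)
    (h₁ : (derivative F).IsRoot a) : (X - C a) ^ 2 ∣ F := by
  by_cases hF : F = 0
  · simp [hF]
  exact (pow_dvd_pow _ ((one_lt_rootMultiplicity_iff_isRoot hF).2 ⟨h₀, h₁⟩)).trans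
    (pow_rootMultiplicity_dvd F a)

theorem X_sub_C_sq_dvd_newtonDefect {P Q p : R[X]} {a : R} (hfix : P.eval a = a * Q.eval a)
    (hcrit : (derivative P).eval a = a * (derivative Q).eval a) (hp : p.IsRoot a) :
    (X - C a) ^ 2 ∣ newtonDefect P Q p := by
  rw [IsRoot.def] at hp
  apply X_sub_C_sq_dvd_of_isRoot_derivative
  · simp only [newtonDefect, IsRoot.def, eval_sub, eval_mul, eval_X]
    linear_combination (derivative p).eval a * hfix + Q.eval a * hp
  · simp only [newtonDefect, IsRoot.def, derivative_sub, derivative_mul, derivative_X,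
      eval_sub, eval_add, eval_mul, eval_X, one_mul]
    linear_combination (derivative p).eval a * hcrit +
      (derivative (derivative p)).eval a * hfix + (derivative Q).eval a * hp

theorem natDegree_newtonDefect_lt {P Q p : R[X]} {n : ℕ} (hP : P.natDegree ≤ n)
    (hQ : Q.natDegree + 1 ≤ n) (hp : p.natDegree ≤ n) :
    (newtonDefect P Q p).natDegree < 2 * n := by
  have hp' : (derivative p).natDegree ≤ n - 1 := (natDegree_derivative_le p).trans (by omega)
  have hXp' : (X * derivative p - p).natDegree ≤ n := by
    refine (natDegree_sub_le _ _).trans (max_le ?_ hp)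
    exact natDegree_mul_le.trans ((add_le_add natDegree_X_le hp').trans (by omega))
  refine (natDegree_sub_le _ _).trans_lt (max_lt ?_ ?_)
  · exact natDegree_mul_le.trans_lt (by omega)
  · exact natDegree_mul_le.trans_lt (by omega)

theorem prod_X_sub_C_sq_dvd {K ι : Type*} [Field K] [Fintype ι] {c : ι → K}
    (hc : Function.Injective c) {F : K[X]} (h : ∀ i, (X - C (c i)) ^ 2 ∣ F) :
    (∏ i, (X - C (c i))) ^ 2 ∣ F := by
  rw [← Finset.prod_pow]
  exact Fintype.prod_dvd_of_coprime (fun i j hij => (pairwise_coprime_X_sub_C hc hij).pow) h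

end Polynomial

theorem eval_derivative_eq_of_deriv_div_eq_zero {𝕜 : Type*} [NontriviallyNormedField 𝕜]
    {P Q : 𝕜[X]} {a : 𝕜} (hQ : Q.eval a ≠ 0) (hfix : P.eval a = a * Q.eval a)
    (hcrit : deriv (fun z => P.eval z / Q.eval z) a = 0) :
    (derivative P).eval a = a * (derivative Q).eval a := by
  rw [deriv_fun_div P.differentiableAt Q.differentiableAt hQ, Polynomial.deriv,
    Polynomial.deriv, div_eq_zero_iff, or_iff_left (pow_ne_zero 2 hQ), sub_eq_zero, hfix] at hcrit
  exact mul_right_cancel₀ hQ (by linear_combination hcrit)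

theorem critically_fixed_is_newton_method_general
    (d : ℕ)
    (P Q : Polynomial ℂ)
    (hPdeg : P.natDegree = d) (hQdeg : Q.natDegree + 1 = P.natDegree)
    (c : Fin d → ℂ) (hinj : Function.Injective c)
    (hfin : ∀ i, Q.eval (c i) ≠ 0)
    (hfix : ∀ i, P.eval (c i) / Q.eval (c i) = c i)
    (hcrit : ∀ i, deriv (fun z => P.eval z / Q.eval z) (c i) = 0) :
    ∀ z : ℂ, Q.eval z ≠ 0 →
      (Polynomial.derivative (∏ i, (X - C (c i)))).eval z ≠ 0 →
      P.eval z / Q.eval z =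
        z - (∏ i, (X - C (c i))).eval z /
          (Polynomial.derivative (∏ i, (X - C (c i)))).eval z := by
  set p : ℂ[X] := ∏ i, (X - C (c i))
  have hpdeg : p.natDegree = d := by simp [p, natDegree_prod _ _ fun i _ => X_sub_C_ne_zero (c i)]
  have hfix' (i : Fin d) : P.eval (c i) = c i * Q.eval (c i) := (div_eq_iff (hfin i)).1 (hfix i)
  have hdvd : p ^ 2 ∣ newtonDefect P Q p := prod_X_sub_C_sq_dvd hinj fun i =>
    X_sub_C_sq_dvd_newtonDefect (hfix' i)
      (eval_derivative_eq_of_deriv_div_eq_zero (hfin i) (hfix' i) (hcrit i))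
      (by simp [p, eval_prod, Finset.prod_eq_zero_iff, sub_eq_zero])
  have hzero : newtonDefect P Q p = 0 := eq_zero_of_dvd_of_natDegree_lt hdvd <| by
    rw [natDegree_pow, hpdeg]
    exact natDegree_newtonDefect_lt hPdeg.le (by omega) hpdeg.le
  intro z hQz hpz
  have hz := congrArg (eval z) hzero
  simp only [newtonDefect, eval_sub, eval_mul, eval_X, eval_zero] at hz
  field_simp
  linear_combination hz

/-- Let `f = P/Q` (in lowest terms) be a rational map of degree `d` with a repelling
fixed point at infinity (`deg P = deg Q + 1` with multiplier `Q.leadingCoeff /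
P.leadingCoeff` of norm `> 1`) and `d` distinct finite fixed critical points
`c₁, …, c_d` (each of local degree 2, so `f(cᵢ) = cᵢ` and `f'(cᵢ) = 0`).  Then `f`
equals the Newton's method map `N_p(z) = z - p(z)/p'(z)` of
`p(z) = (z - c₁)⋯(z - c_d)` wherever both are defined. -/
theorem critically_fixed_is_newton_method
    (d : ℕ) (hd : 2 ≤ d)
    (P Q : Polynomial ℂ) (hQ : Q ≠ 0) (hcop : IsCoprime P Q)
    (hPdeg : P.natDegree = d) (hQdeg : Q.natDegree + 1 = P.natDegree)
    (hrepelling : 1 < ‖Q.leadingCoeff / P.leadingCoeff‖)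
    (c : Fin d → ℂ) (hinj : Function.Injective c)
    (hfin : ∀ i, Q.eval (c i) ≠ 0)
    (hfix : ∀ i, P.eval (c i) / Q.eval (c i) = c i)
    (hcrit : ∀ i, deriv (fun z => P.eval z / Q.eval z) (c i) = 0) :
    ∀ z : ℂ, Q.eval z ≠ 0 →
      (Polynomial.derivative (∏ i, (X - C (c i)))).eval z ≠ 0 →
      P.eval z / Q.eval z =
        z - (∏ i, (X - C (c i))).eval z /
          (Polynomial.derivative (∏ i, (X - C (c i)))).eval z :=
  critically_fixed_is_newton_method_general d P Q hPdeg hQdeg c hinj hfin hfix hcrit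
end
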